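/- arXiv:math/0611587 — 8 statements merged into one kernel-verified Lean document; each statement's English description precedes it below -/
import Mathlib

section
/- Let a and b be positive integers with a ≤ b and gcd(a,b) = 1. The set {(s+1)/a + (t+1)/b : s,t ∈ ℕ} contains 1 + (k+1)/(a·b) for every natural number k; that is, every rational of the form (ab + k + 1)/(ab) with k ∈ ℕ can be written as (s+1)/a + (t+1)/b for some s,t ∈ ℕ. -/
lemma key_aux (a b n : ℤ) (ha : 0 < a) (hb : 0 < b) (h : IsCoprime a b)
    (hn : a * b < n) : ∃ S T : ℤ, 1 ≤ S ∧ 1 ≤ T ∧ b * S + a * T = n := by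
  obtain ⟨u, v, huv⟩ := h
  set q := (n * v) / a with hq
  set x := (n * v) % a with hx
  have hxq : n * v = a * q + x := (Int.mul_ediv_add_emod (n * v) a).symm
  have hx0 : 0 ≤ x := Int.emod_nonneg _ ha.ne'
  have hxa : x < a := Int.emod_lt_of_pos _ ha
  by_cases hxz : x = 0
  · refine ⟨a, n * u + b * q - b, by omega, ?_, ?_⟩
    · have heq : b * a + a * (n * u + b * q - b) = n := by
        linear_combination (-b) * hxq + n * huv - b * hxz
      have h1 : 0 < a * (n * u + b * q - b) := by nlinarith
      have := lt_of_mul_lt_mul_left (by linarith : a * 0 < a * (n * u + b * q - b)) ha.le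
      omega
    · linear_combination (-b) * hxq + n * huv - b * hxz
  · refine ⟨x, n * u + b * q, by omega, ?_, ?_⟩
    · have heq : b * x + a * (n * u + b * q) = n := by
        linear_combination (-b) * hxq + n * huv
      have hbx : b * x ≤ b * a := by nlinarith
      have h1 : 0 < a * (n * u + b * q) := by linarith
      have := lt_of_mul_lt_mul_left (by linarith : a * 0 < a * (n * u + b * q)) ha.le
      omega
    · linear_combination (-b) * hxq + n * huv

theorem stmt_1 (a b : ℕ) (ha : 0 < a) (hab : a ≤ b) (hcop : Nat.Coprime a b) :
    ∀ k : ℕ, ∃ s t : ℕ,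
      ((s : ℚ) + 1) / a + ((t : ℚ) + 1) / b = 1 + ((k : ℚ) + 1) / ((a : ℚ) * b) := by
  intro k
  have hb : 0 < b := lt_of_lt_of_le ha hab
  obtain ⟨S, T, hS1, hT1, heq⟩ := key_aux (a : ℤ) (b : ℤ) ((a : ℤ) * b + k + 1)
    (by exact_mod_cast ha) (by exact_mod_cast hb)
    (Nat.isCoprime_iff_coprime.mpr hcop) (by linarith)
  refine ⟨(S - 1).toNat, (T - 1).toNat, ?_⟩
  have hs : (((S - 1).toNat : ℤ) : ℚ) = (S : ℚ) - 1 := by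
    rw [Int.toNat_of_nonneg (by linarith)]; push_cast; ring
  have ht : (((T - 1).toNat : ℤ) : ℚ) = (T : ℚ) - 1 := by
    rw [Int.toNat_of_nonneg (by linarith)]; push_cast; ring
  have ha' : (a : ℚ) ≠ 0 := Nat.cast_ne_zero.mpr ha.ne'
  have hb' : (b : ℚ) ≠ 0 := Nat.cast_ne_zero.mpr hb.ne'
  have heqQ : (b : ℚ) * S + a * T = a * b + k + 1 := by exact_mod_cast heq
  rw [show (((S - 1).toNat : ℕ) : ℚ) = (((S - 1).toNat : ℤ) : ℚ) by push_cast; ring,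
      show (((T - 1).toNat : ℕ) : ℚ) = (((T - 1).toNat : ℤ) : ℚ) by push_cast; ring,
      hs, ht]
  field_simp
  ring_nf
  linear_combination heqQ
end

section
/- Let a ≤ b be positive coprime integers and let H' = {(s+1)/a + (t+1)/b : s,t ∈ ℕ, (s+1)/a + (t+1)/b < 1}. Then H' is empty if and only if a = 1; H' has exactly one element if and only if (a,b) = (2,3); and H' has exactly two elements if and only if (a,b) = (2,5). -/
private def Sset (a b : ℕ) : Set ℚ :=
  {x : ℚ | (∃ s t : ℕ, x = ((s : ℚ) + 1) / a + ((t : ℚ) + 1) / b) ∧ x < 1}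

private lemma mem_Sset {a b : ℕ} (s t : ℕ) (ha : 0 < a) (hb : 0 < b)
    (h : (s + 1) * b + (t + 1) * a < a * b) :
    ((s : ℚ) + 1) / a + ((t : ℚ) + 1) / b ∈ Sset a b := by
  refine ⟨⟨s, t, rfl⟩, ?_⟩
  have ha' : (0:ℚ) < a := by exact_mod_cast ha
  have hb' : (0:ℚ) < b := by exact_mod_cast hb
  rw [div_add_div _ _ ha'.ne' hb'.ne', div_lt_one (by positivity)]
  have h2 : (((s+1)*b + (t+1)*a : ℕ) : ℚ) < ((a*b : ℕ) : ℚ) := by exact_mod_cast h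
  push_cast at h2
  nlinarith [h2]

private lemma ne_Sval {a b : ℕ} (ha : 0 < a) (hb : 0 < b) {s1 t1 s2 t2 : ℕ}
    (h : (s1+1)*b + (t1+1)*a ≠ (s2+1)*b + (t2+1)*a) :
    ((s1 : ℚ) + 1) / a + ((t1 : ℚ) + 1) / b ≠ ((s2 : ℚ) + 1) / a + ((t2 : ℚ) + 1) / b := by
  have ha' : (0:ℚ) < a := by exact_mod_cast ha
  have hb' : (0:ℚ) < b := by exact_mod_cast hb
  intro heq
  apply h
  have h2 : (((s1+1)*b + (t1+1)*a : ℕ) : ℚ) = (((s2+1)*b + (t2+1)*a : ℕ) : ℚ) := by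
    field_simp at heq
    push_cast
    nlinarith [heq]
  exact_mod_cast h2

private lemma Sset_one {b : ℕ} (hb : 0 < b) : Sset 1 b = ∅ := by
  ext x
  simp only [Sset, Set.mem_setOf_eq, Set.mem_empty_iff_false, iff_false, not_and, not_lt]
  rintro ⟨s, t, rfl⟩
  have hb' : (0:ℚ) < b := by exact_mod_cast hb
  have h1 : (0:ℚ) < ((t:ℚ)+1)/b := by positivity
  have hs : (0:ℚ) ≤ s := by positivity
  push_cast
  rw [div_one]
  linarith

private lemma Sset_23 : Sset 2 3 = {5/6} := by
  ext x
  simp only [Sset, Set.mem_setOf_eq, Set.mem_singleton_iff]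
  constructor
  · rintro ⟨⟨s, t, rfl⟩, hlt⟩
    push_cast at hlt
    have h : 3*(s:ℚ) + 2*t + 5 < 6 := by linarith
    have h' : 3*s + 2*t + 5 < 6 := by exact_mod_cast h
    have hs : s = 0 := by omega
    have ht : t = 0 := by omega
    subst hs; subst ht; norm_num
  · rintro rfl
    exact ⟨⟨0, 0, by norm_num⟩, by norm_num⟩

private lemma Sset_25 : Sset 2 5 = {7/10, 9/10} := by
  ext x
  simp only [Sset, Set.mem_setOf_eq, Set.mem_insert_iff, Set.mem_singleton_iff]
  constructor
  · rintro ⟨⟨s, t, rfl⟩, hlt⟩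
    push_cast at hlt
    have h : 5*(s:ℚ) + 2*t + 7 < 10 := by linarith
    have h' : 5*s + 2*t + 7 < 10 := by exact_mod_cast h
    have hs : s = 0 := by omega
    have ht : t ≤ 1 := by omega
    subst hs
    interval_cases t
    · left; norm_num
    · right; norm_num
  · rintro (rfl | rfl)
    · exact ⟨⟨0, 0, by norm_num⟩, by norm_num⟩
    · exact ⟨⟨0, 1, by norm_num⟩, by norm_num⟩

private lemma ncard_ne_one' {α : Type*} {S : Set α} {x y : α} (hx : x ∈ S) (hy : y ∈ S)
    (hxy : x ≠ y) : S.ncard ≠ 1 := by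
  intro h
  obtain ⟨z, hz⟩ := Set.ncard_eq_one.mp h
  rw [hz] at hx hy
  simp only [Set.mem_singleton_iff] at hx hy
  exact hxy (hx.trans hy.symm)

private lemma ncard_ne_two' {α : Type*} {S : Set α} {x y z : α} (hx : x ∈ S) (hy : y ∈ S)
    (hz : z ∈ S) (hxy : x ≠ y) (hxz : x ≠ z) (hyz : y ≠ z) : S.ncard ≠ 2 := by
  intro h
  obtain ⟨u, v, huv, hS⟩ := Set.ncard_eq_two.mp h
  rw [hS] at hx hy hz
  simp only [Set.mem_insert_iff, Set.mem_singleton_iff] at hx hy hz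
  rcases hx with rfl | rfl <;> rcases hy with rfl | rfl <;> rcases hz with rfl | rfl <;> tauto

private lemma odd_of_cop2 {b : ℕ} (h : Nat.Coprime 2 b) : b % 2 = 1 := by
  have h2 : ¬ (2 ∣ b) := by
    intro hd
    have h3 : 2 ∣ Nat.gcd 2 b := Nat.dvd_gcd dvd_rfl hd
    rw [h] at h3
    omega
  omega

theorem stmt_4 (a b : ℕ) (ha : 0 < a) (hab : a ≤ b) (hcop : Nat.Coprime a b) :
    ({x : ℚ | (∃ s t : ℕ, x = ((s : ℚ) + 1) / a + ((t : ℚ) + 1) / b) ∧ x < 1} = ∅ ↔ a = 1) ∧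
    ({x : ℚ | (∃ s t : ℕ, x = ((s : ℚ) + 1) / a + ((t : ℚ) + 1) / b) ∧ x < 1}.ncard = 1
      ↔ (a = 2 ∧ b = 3)) ∧
    ({x : ℚ | (∃ s t : ℕ, x = ((s : ℚ) + 1) / a + ((t : ℚ) + 1) / b) ∧ x < 1}.ncard = 2
      ↔ (a = 2 ∧ b = 5)) := by
  have hb : 0 < b := lt_of_lt_of_le ha hab
  have hSdef : {x : ℚ | (∃ s t : ℕ, x = ((s : ℚ) + 1) / a + ((t : ℚ) + 1) / b) ∧ x < 1}
      = Sset a b := rfl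
  rw [hSdef]
  -- if 2 ≤ a then a < b
  have hlt : 2 ≤ a → a < b := by
    intro h2
    rcases eq_or_lt_of_le hab with rfl | h
    · have hg : Nat.gcd a a = a := Nat.gcd_self a
      unfold Nat.Coprime at hcop
      omega
    · exact h
  refine ⟨⟨?_, ?_⟩, ⟨?_, ?_⟩, ⟨?_, ?_⟩⟩
  · -- empty → a = 1
    intro hE
    by_contra hA
    have h2 : 2 ≤ a := by omega
    have h3 : a < b := hlt h2
    have hcond : (0 + 1) * b + (0 + 1) * a < a * b := by
      have h2b : 2 * b ≤ a * b := Nat.mul_le_mul_right b h2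
      omega
    have hm := mem_Sset (a := a) (b := b) 0 0 ha hb hcond
    rw [hE] at hm
    exact hm
  · rintro rfl
    exact Sset_one hb
  · -- ncard = 1 → (2,3)
    intro hn
    by_contra hC
    rcases Nat.lt_or_ge a 2 with h1 | h2
    · have : a = 1 := by omega
      subst this
      rw [Sset_one hb] at hn
      simp at hn
    · have hab' : a < b := hlt h2
      rcases Nat.lt_or_ge a 3 with ha2 | ha3
      · -- a = 2
        have ha2' : a = 2 := by omega
        subst ha2'
        have hodd : b % 2 = 1 := odd_of_cop2 hcop
        have hb5 : 5 ≤ b := by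
          rcases Nat.lt_or_ge b 5 with h | h
          · exact absurd ⟨rfl, by omega⟩ hC
          · exact h
        exact ncard_ne_one'
          (mem_Sset 0 0 ha hb (by omega)) (mem_Sset 0 1 ha hb (by omega))
          (ne_Sval ha hb (by omega)) hn
      · -- 3 ≤ a, a < b
        have h3b : 3 * b ≤ a * b := Nat.mul_le_mul_right b ha3
        exact ncard_ne_one'
          (mem_Sset 0 0 ha hb (by omega)) (mem_Sset 0 1 ha hb (by omega))
          (ne_Sval ha hb (by omega)) hn
  · rintro ⟨rfl, rfl⟩
    rw [Sset_23]
    exact Set.ncard_singleton _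
  · -- ncard = 2 → (2,5)
    intro hn
    by_contra hC
    rcases Nat.lt_or_ge a 2 with h1 | h2
    · have : a = 1 := by omega
      subst this
      rw [Sset_one hb] at hn
      simp at hn
    · have hab' : a < b := hlt h2
      rcases Nat.lt_or_ge a 3 with ha2 | ha3
      · -- a = 2
        have ha2' : a = 2 := by omega
        subst ha2'
        have hodd : b % 2 = 1 := odd_of_cop2 hcop
        rcases Nat.lt_or_ge b 7 with h | hb7
        · -- b = 3 or b = 5
          rcases (show b = 3 ∨ b = 5 by omega) with rfl | rfl
          · rw [Sset_23] at hn
            simp at hn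
          · exact hC ⟨rfl, rfl⟩
        · exact ncard_ne_two'
            (mem_Sset 0 0 ha hb (by omega)) (mem_Sset 0 1 ha hb (by omega))
            (mem_Sset 0 2 ha hb (by omega))
            (ne_Sval ha hb (by omega)) (ne_Sval ha hb (by omega))
            (ne_Sval ha hb (by omega)) hn
      · -- 3 ≤ a, a < b
        have h3b : 3 * b ≤ a * b := Nat.mul_le_mul_right b ha3
        exact ncard_ne_two'
          (mem_Sset 0 0 ha hb (by omega)) (mem_Sset 0 1 ha hb (by omega))
          (mem_Sset 1 0 ha hb (by omega))
          (ne_Sval ha hb (by omega)) (ne_Sval ha hb (by omega))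
          (ne_Sval ha hb (by omega)) hn
  · rintro ⟨rfl, rfl⟩
    rw [Sset_25]
    exact Set.ncard_pair (by norm_num)
end

section
/- With P an n×n proximity matrix (unipotent lower triangular, off-diagonal entries 0 or -1, column -1 entries consecutive starting below the diagonal) and P^{-1} = (x_{i,j}), the rows of P^{-1} are nonnegative, and the point basis (bottom row of P^{-1}) satisfies the proximity inequalities: for each i, a_i ≥ Σ_{j : p_{j,i} = -1} a_j, with equality unless i = n where a_n = 1 + Σ_{j ≻ n} a_j (vacuously a_n = 1). -/
/-!
A lower unitriangular `P` has determinant `1`, so `P⁻¹` is an honest inverse. Row `i` of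
`P * P⁻¹ = 1` reads `x i j = δ i j - ∑_{k < i} P i k * x k j`; as `P i k ≤ 0` below the diagonal,
nonnegativity of `P⁻¹` follows by induction on `i`. Column `i` of `P⁻¹ * P = 1`, read in any row
`r`, is `x r i - ∑_{P j i = -1} x r j = δ r i` because the off-diagonal entries of `P` lie in
`{0, -1}`; for the bottom row these are the proximity relations of the point basis.
-/

open Finset

namespace Matrix

variable {ι R : Type*} [Fintype ι] [DecidableEq ι]

section LowerTriangular

variable [LinearOrder ι] [CommRing R] {P : Matrix ι ι R}

theorem det_eq_one_of_isLowerTriangular (hP : P.IsLowerTriangular) (hdiag : ∀ i, P i i = 1) :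
    P.det = 1 := by
  simp [det_of_isLowerTriangular P hP, hdiag]

theorem inv_apply_nonneg_of_isLowerTriangular [PartialOrder R] [IsOrderedRing R]
    (hP : P.IsLowerTriangular) (hdiag : ∀ i, P i i = 1) (hlower : ∀ i j, j < i → P i j ≤ 0)
    (i j : ι) : 0 ≤ P⁻¹ i j := by
  induction i using WellFoundedLT.induction with
  | _ i ih =>
    have hrow := congrFun (congrFun (P.mul_nonsing_inv
      (by simp [det_eq_one_of_isLowerTriangular hP hdiag])) i) j
    rw [mul_apply, ← add_sum_erase _ _ (mem_univ i), hdiag, one_mul] at hrow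
    have hrest : ∑ k ∈ univ.erase i, P i k * P⁻¹ k j ≤ 0 := by
      refine sum_nonpos fun k hk => ?_
      rcases lt_or_gt_of_ne (ne_of_mem_erase hk) with hki | hik
      · exact mul_nonpos_of_nonpos_of_nonneg (hlower i k hki) (ih k hki)
      · rw [hP hik, zero_mul]
    have hone : (0 : R) ≤ (1 : Matrix ι ι R) i j := by
      rw [one_apply]; split_ifs <;> simp
    rw [eq_sub_of_add_eq hrow]
    exact sub_nonneg.mpr (hrest.trans hone)

end LowerTriangular

theorem inv_apply_eq_sum_add_ite [CommRing R] [DecidableEq R] [NeZero (2 : R)] {P : Matrix ι ι R}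
    (hP : IsUnit P.det) (hdiag : ∀ i, P i i = 1) (i : ι)
    (hoff : ∀ j, j ≠ i → P j i = 0 ∨ P j i = -1) (r : ι) :
    P⁻¹ r i = (∑ j ∈ univ.filter (fun j => P j i = -1), P⁻¹ r j) + if i = r then 1 else 0 := by
  have hcol := congrFun (congrFun (P.nonsing_inv_mul hP) r) i
  rw [mul_apply, ← add_sum_erase _ _ (mem_univ i), hdiag, mul_one, one_apply] at hcol
  have hone : (1 : R) ≠ -1 := fun h => two_ne_zero (α := R) (by linear_combination h)
  have hzero : (0 : R) ≠ -1 := fun h => two_ne_zero (α := R) (by linear_combination 2 * h)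
  have hrest : ∑ j ∈ univ.erase i, P⁻¹ r j * P j i =
      -∑ j ∈ univ.filter (fun j => P j i = -1), P⁻¹ r j := by
    rw [sum_filter, ← sum_neg_distrib, ← sum_erase univ (a := i) (by simp [hdiag, hone])]
    refine sum_congr rfl fun j hj => ?_
    rcases hoff j (ne_of_mem_erase hj) with h | h <;> simp [h, hzero]
  rw [hrest] at hcol
  simp only [eq_comm (a := i)]
  split_ifs at hcol ⊢ <;> linear_combination hcol

end Matrix

theorem stmt_9 (n : ℕ) (hn : 0 < n) (P : Matrix (Fin n) (Fin n) ℤ)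
    (hdiag : ∀ i, P i i = 1)
    (hupper : ∀ i j : Fin n, i < j → P i j = 0)
    (hlower : ∀ i j : Fin n, j < i → P i j = 0 ∨ P i j = -1) :
    (∀ i j : Fin n, 0 ≤ P⁻¹ i j) ∧
    (∀ i : Fin n,
      P⁻¹ ⟨n - 1, by omega⟩ i =
        (∑ j ∈ Finset.univ.filter (fun j : Fin n => P j i = -1), P⁻¹ ⟨n - 1, by omega⟩ j)
        + (if i = ⟨n - 1, by omega⟩ then 1 else 0)) := by
  have hP : P.IsLowerTriangular := fun i j h => hupper i j h
  refine ⟨Matrix.inv_apply_nonneg_of_isLowerTriangular hP hdiag fun i j hji => ?_,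
    fun i => Matrix.inv_apply_eq_sum_add_ite ?_ hdiag i (fun j hji => ?_) _⟩
  · rcases hlower i j hji with h | h <;> simp [h]
  · simp [Matrix.det_eq_one_of_isLowerTriangular hP hdiag]
  · rcases lt_or_gt_of_ne hji with h | h
    · exact .inl (hupper j i h)
    · exact hlower j i h
end

section
/- In the dual graph of a simple complete ideal, two vertices ε_i and ε_j with i < j are adjacent (i.e. E_i · E_j ≠ 0) if and only if j = max{ν : ν ≻ i}; in that case E_i · E_j = 1. Consequently, for each i < n there is at most one j > i adjacent to i, namely j = i + w_i − 1 where w_i = −E_i·E_i = 1 + #{ν : ν ≻ i}. -/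
/-!
Write `ν ≻ i` for `P ν i = -1`. For `i < j` the entry `(PᵀP) i j = ∑_ν P ν i * P ν j` is
`P j i` (the term `ν = j`) plus the number of common proximates of `i` and `j`. The points
proximate to `i` form an interval `(i, k]`, and a point `ν ≻ i, j` with `i < j` must have
`j = ν - 1`, since `ν ≻ ν - 1` and `ν` has at most two proximates. Hence the common proximates of
`i` and `j` are `{j + 1}` when `j < k` and none otherwise, so that `E_i · E_j = -(PᵀP) i j` is `1`
if `j = k` and `0` otherwise.
-/

open Matrix Finset

section Proximity

variable {n : ℕ} {P : Matrix (Fin n) (Fin n) ℤ}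

lemma lt_of_proximate (hdiag : ∀ i, P i i = 1) (hupper : ∀ i j : Fin n, i < j → P i j = 0)
    {ν j : Fin n} (h : P ν j = -1) : j < ν := by
  by_contra! hνj
  rcases hνj.lt_or_eq with hlt | rfl
  · simp [hupper ν j hlt] at h
  · simp [hdiag ν] at h

lemma transpose_mul_apply_of_lt (hdiag : ∀ i, P i i = 1)
    (hupper : ∀ i j : Fin n, i < j → P i j = 0)
    (hlower : ∀ i j : Fin n, j < i → P i j = 0 ∨ P i j = -1) {i j : Fin n} (hij : i < j) :
    (Pᵀ * P) i j = P j i + #{ν | P ν i = -1 ∧ P ν j = -1} := by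
  have hterm : ∀ ν, Pᵀ i ν * P ν j =
      (if ν = j then P j i else 0) + if P ν i = -1 ∧ P ν j = -1 then 1 else 0 := by
    intro ν
    rw [transpose_apply]
    rcases lt_trichotomy ν j with hνj | rfl | hjν
    · simp [hupper ν j hνj, hνj.ne]
    · simp [hdiag ν]
    · rcases hlower ν i (hij.trans hjν) with h1 | h1 <;> rcases hlower ν j hjν with h2 | h2 <;>
        simp [h1, h2, hjν.ne']
  rw [mul_apply, sum_congr rfl fun ν _ => hterm ν, sum_add_distrib, sum_ite_eq' univ j,
    sum_boole]
  simp

lemma val_eq_succ_of_proximate_of_proximate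
    (hpred : ∀ ν : Fin n, 0 < ν.val →
      P ν ⟨ν.val - 1, Nat.lt_of_le_of_lt (Nat.sub_le _ _) ν.isLt⟩ = -1)
    (hatmost : ∀ ν : Fin n, #{j | P ν j = -1} ≤ 2)
    {i j ν : Fin n} (hij : i < j) (hjν : j < ν) (hi : P ν i = -1) (hj : P ν j = -1) :
    (ν : ℕ) = j + 1 := by
  by_contra hne
  have hjν' : (j : ℕ) < ν := hjν
  set μ : Fin n := ⟨ν - 1, by omega⟩
  have hμ : P ν μ = -1 := hpred ν (by omega)
  have hjμ : j < μ := by rw [Fin.lt_def]; dsimp [μ]; omega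
  have hthree : #{i, j, μ} = 3 := card_eq_three.mpr ⟨i, j, μ, hij.ne, (hij.trans hjμ).ne, hjμ.ne, rfl⟩
  have hsub : {i, j, μ} ⊆ ({c | P ν c = -1} : Finset (Fin n)) := by
    intro c hc
    simp only [mem_insert, mem_singleton] at hc
    rcases hc with rfl | rfl | rfl <;> simpa
  have := (card_le_card hsub).trans (hatmost ν)
  omega

variable {i k : Fin n} (hk : ∀ ν, P ν i = -1 ↔ i < ν ∧ ν ≤ k)
include hk

lemma card_proximates : #{ν | P ν i = -1} = (k : ℕ) - i := by
  rw [← Fin.card_Ioc]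
  congr 1
  ext ν
  simp [hk ν]

lemma proximate_and_forall_le_iff {j : Fin n} (hij : i < j) :
    (P j i = -1 ∧ ∀ ν, P ν i = -1 → ν ≤ j) ↔ j = k := by
  constructor
  · rintro ⟨hj, hmax⟩
    have hjk := ((hk j).mp hj).2
    exact le_antisymm hjk (hmax k ((hk k).mpr ⟨hij.trans_le hjk, le_rfl⟩))
  · rintro rfl
    exact ⟨(hk j).mpr ⟨hij, le_rfl⟩, fun ν hν => ((hk ν).mp hν).2⟩

lemma card_common_proximates (hdiag : ∀ i, P i i = 1)
    (hupper : ∀ i j : Fin n, i < j → P i j = 0)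
    (hpred : ∀ ν : Fin n, 0 < ν.val →
      P ν ⟨ν.val - 1, Nat.lt_of_le_of_lt (Nat.sub_le _ _) ν.isLt⟩ = -1)
    (hatmost : ∀ ν : Fin n, #{j | P ν j = -1} ≤ 2) {j : Fin n} (hij : i < j) :
    #{ν | P ν i = -1 ∧ P ν j = -1} = if j < k then 1 else 0 := by
  have hsucc : ∀ ν, P ν i = -1 → P ν j = -1 → (ν : ℕ) = j + 1 := fun ν hi hj =>
    val_eq_succ_of_proximate_of_proximate hpred hatmost hij (lt_of_proximate hdiag hupper hj) hi hj
  split_ifs with hjk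
  · have hj1 : (j : ℕ) + 1 < n := by have := k.isLt; rw [Fin.lt_def] at hjk; omega
    rw [card_eq_one]
    refine ⟨⟨j + 1, hj1⟩, eq_singleton_iff_unique_mem.mpr ⟨?_, ?_⟩⟩
    · simp only [mem_filter, mem_univ, true_and]
      refine ⟨(hk _).mpr ⟨?_, ?_⟩, hpred ⟨j + 1, hj1⟩ (by simp)⟩
      · rw [Fin.lt_def] at hij ⊢; dsimp; omega
      · rw [Fin.le_def]; rw [Fin.lt_def] at hjk; dsimp; omega
    · simp only [mem_filter, mem_univ, true_and]
      rintro ν ⟨hi, hj⟩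
      exact Fin.ext (hsucc ν hi hj)
  · rw [card_eq_zero, filter_eq_empty_iff]
    rintro ν - ⟨hi, hj⟩
    have := hsucc ν hi hj
    have := ((hk ν).mp hi).2
    rw [Fin.le_def] at this
    rw [not_lt, Fin.le_def] at hjk
    omega

lemma neg_transpose_mul_apply_of_lt (hdiag : ∀ i, P i i = 1)
    (hupper : ∀ i j : Fin n, i < j → P i j = 0)
    (hlower : ∀ i j : Fin n, j < i → P i j = 0 ∨ P i j = -1)
    (hpred : ∀ ν : Fin n, 0 < ν.val →
      P ν ⟨ν.val - 1, Nat.lt_of_le_of_lt (Nat.sub_le _ _) ν.isLt⟩ = -1)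
    (hatmost : ∀ ν : Fin n, #{j | P ν j = -1} ≤ 2) {j : Fin n} (hij : i < j) :
    (-(Pᵀ * P)) i j = if j = k then 1 else 0 := by
  have hji : P j i = if j ≤ k then -1 else 0 := by
    split_ifs with hjk
    · exact (hk j).mpr ⟨hij, hjk⟩
    · exact (hlower j i hij).resolve_right fun h => hjk ((hk j).mp h).2
  rw [neg_apply, transpose_mul_apply_of_lt hdiag hupper hlower hij, hji,
    card_common_proximates hk hdiag hupper hpred hatmost hij]
  rcases lt_trichotomy j k with h | rfl | h
  · simp [h.le, h, h.ne]
  · simp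
  · simp [h.not_ge, h.not_gt, h.ne']

end Proximity

theorem stmt_10_general (n : ℕ) (P : Matrix (Fin n) (Fin n) ℤ)
    (hdiag : ∀ i, P i i = 1)
    (hupper : ∀ i j : Fin n, i < j → P i j = 0)
    (hlower : ∀ i j : Fin n, j < i → P i j = 0 ∨ P i j = -1)
    (hcol : ∀ j : Fin n, ∃ k : Fin n, ∀ i : Fin n, P i j = -1 ↔ j < i ∧ i ≤ k)
    (hpred : ∀ ν : Fin n, 0 < ν.val →
      P ν ⟨ν.val - 1, Nat.lt_of_le_of_lt (Nat.sub_le _ _) ν.isLt⟩ = -1)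
    (hatmost : ∀ ν : Fin n, (Finset.univ.filter (fun j : Fin n => P ν j = -1)).card ≤ 2)
    (N : Matrix (Fin n) (Fin n) ℤ) (hN : N = -(Pᵀ * P)) :
    (∀ i j : Fin n, i < j →
      (N i j ≠ 0 ↔ (P j i = -1 ∧ ∀ ν : Fin n, P ν i = -1 → ν ≤ j))) ∧
    (∀ i j : Fin n, i < j → N i j ≠ 0 → N i j = 1) ∧
    (∀ i j : Fin n, i < j → N i j ≠ 0 →
      (j : ℕ) = (i : ℕ) + (Finset.univ.filter (fun ν : Fin n => P ν i = -1)).card) := by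
  subst hN
  have hentry : ∀ i j : Fin n, i < j → ∃ k : Fin n, (∀ ν, P ν i = -1 ↔ i < ν ∧ ν ≤ k) ∧
      (-(Pᵀ * P)) i j = if j = k then 1 else 0 := fun i j hij =>
    (hcol i).imp fun k hk =>
      ⟨hk, neg_transpose_mul_apply_of_lt hk hdiag hupper hlower hpred hatmost hij⟩
  refine ⟨fun i j hij => ?_, fun i j hij => ?_, fun i j hij => ?_⟩ <;>
    obtain ⟨k, hk, hNij⟩ := hentry i j hij <;> rw [hNij]
  · rw [proximate_and_forall_le_iff hk hij]
    split_ifs <;> simpa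
  · split_ifs <;> simp
  · split_ifs with hjk
    · subst hjk
      rw [card_proximates hk]
      omega
    · simp

theorem stmt_10 (n : ℕ) (hn : 0 < n) (P : Matrix (Fin n) (Fin n) ℤ)
    (hdiag : ∀ i, P i i = 1)
    (hupper : ∀ i j : Fin n, i < j → P i j = 0)
    (hlower : ∀ i j : Fin n, j < i → P i j = 0 ∨ P i j = -1)
    (hcol : ∀ j : Fin n, ∃ k : Fin n, ∀ i : Fin n, P i j = -1 ↔ j < i ∧ i ≤ k)
    (hpred : ∀ ν : Fin n, 0 < ν.val →
      P ν ⟨ν.val - 1, Nat.lt_of_le_of_lt (Nat.sub_le _ _) ν.isLt⟩ = -1)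
    (hatmost : ∀ ν : Fin n, (Finset.univ.filter (fun j : Fin n => P ν j = -1)).card ≤ 2)
    (N : Matrix (Fin n) (Fin n) ℤ) (hN : N = -(Pᵀ * P)) :
    (∀ i j : Fin n, i < j →
      (N i j ≠ 0 ↔ (P j i = -1 ∧ ∀ ν : Fin n, P ν i = -1 → ν ≤ j))) ∧
    (∀ i j : Fin n, i < j → N i j ≠ 0 → N i j = 1) ∧
    (∀ i j : Fin n, i < j → N i j ≠ 0 →
      (j : ℕ) = (i : ℕ) + (Finset.univ.filter (fun ν : Fin n => P ν i = -1)).card) :=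
  stmt_10_general n P hdiag hupper hlower hcol hpred hatmost N hN
end

section
/- Let a ≤ b be positive coprime integers with a ≥ 2 and suppose b/a gives exactly the set H' = {(s+1)/a + (t+1)/b < 1 : s,t ∈ ℕ} with at least 3 elements. Then the three smallest elements ξ < ψ < ζ of the full set H = {(s+1)/a + (t+1)/b : s,t ∈ ℕ} satisfy: ξ = 1/a + 1/b, ψ = 1/a + 2/b, and a = 1/(2ξ − ψ). -/
section LatticeSums

variable {K : Type*} [Field K] [LinearOrder K] [IsStrictOrderedRing K] {a b : K}

theorem one_div_add_one_div_le_add_div (ha : 0 ≤ a) (hb : 0 ≤ b) (s t : ℕ) :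
    1 / a + 1 / b ≤ ((s : K) + 1) / a + ((t : K) + 1) / b := by
  gcongr <;> simp

/-- Away from `(s, t) = (0, 0)`, raising `t` costs `1 / b` while raising `s` costs `1 / a ≥ 1 / b`. -/
theorem one_div_add_two_div_le_add_div (ha : 0 < a) (hab : a ≤ b) {s t : ℕ}
    (hst : 0 < s ∨ 0 < t) :
    1 / a + 2 / b ≤ ((s : K) + 1) / a + ((t : K) + 1) / b := by
  have hb : 0 < b := ha.trans_le hab
  rcases Nat.eq_zero_or_pos t with rfl | ht
  · have hs : (1 : K) ≤ s := by exact_mod_cast hst.resolve_right (lt_irrefl 0)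
    calc 1 / a + 2 / b = 1 / a + 1 / b + 1 / b := by ring
      _ ≤ 1 / a + 1 / a + 1 / b := by gcongr
      _ = 2 / a + 1 / b := by ring
      _ ≤ ((s : K) + 1) / a + (((0 : ℕ) : K) + 1) / b := by
        gcongr
        · linarith
        · simp
  · have ht : (1 : K) ≤ t := by exact_mod_cast ht
    gcongr
    · simp
    · linarith

end LatticeSums

theorem stmt_13_general (a b : ℕ) (ha : 2 ≤ a) (hab : a ≤ b)
    (ξ ψ ζ : ℚ)
    (hξ : ξ ∈ {x : ℚ | ∃ s t : ℕ, x = ((s : ℚ) + 1) / a + ((t : ℚ) + 1) / b})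
    (hψ : ψ ∈ {x : ℚ | ∃ s t : ℕ, x = ((s : ℚ) + 1) / a + ((t : ℚ) + 1) / b})
    (hord : ξ < ψ ∧ ψ < ζ)
    (hξmin : ∀ x ∈ {x : ℚ | ∃ s t : ℕ, x = ((s : ℚ) + 1) / a + ((t : ℚ) + 1) / b}, ξ ≤ x)
    (hψmin : ∀ x ∈ {x : ℚ | ∃ s t : ℕ, x = ((s : ℚ) + 1) / a + ((t : ℚ) + 1) / b},
      x ≠ ξ → ψ ≤ x) :
    ξ = 1 / a + 1 / b ∧ ψ = 1 / a + 2 / b ∧ (a : ℚ) = 1 / (2 * ξ - ψ) := by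
  have haQ : (0 : ℚ) < a := by exact_mod_cast (by omega : 0 < a)
  have habQ : (a : ℚ) ≤ b := by exact_mod_cast hab
  have hbQ : (0 : ℚ) < b := haQ.trans_le habQ
  have hξeq : ξ = 1 / a + 1 / b := by
    obtain ⟨s, t, rfl⟩ := hξ
    refine le_antisymm ?_ (one_div_add_one_div_le_add_div haQ.le hbQ.le s t)
    simpa using hξmin _ ⟨0, 0, by simp⟩
  have hψeq : ψ = 1 / a + 2 / b := by
    refine le_antisymm ?_ ?_
    · refine hψmin _ ⟨0, 1, by norm_num⟩ ?_
      rw [hξeq]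
      intro h
      have : (2 : ℚ) / b = 1 / b := by linarith
      field_simp at this
      norm_num at this
    · obtain ⟨s, t, rfl⟩ := hψ
      refine one_div_add_two_div_le_add_div haQ habQ ?_
      by_contra! h
      obtain ⟨rfl, rfl⟩ : s = 0 ∧ t = 0 := by omega
      exact hord.1.ne' (by simp [hξeq])
  refine ⟨hξeq, hψeq, ?_⟩
  rw [hξeq, hψeq, show 2 * (1 / (a : ℚ) + 1 / b) - (1 / a + 2 / b) = 1 / a by ring, one_div_one_div]

theorem stmt_13 (a b : ℕ) (ha : 2 ≤ a) (hab : a ≤ b) (hcop : Nat.Coprime a b)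
    (h3 : 3 ≤ {x : ℚ | (∃ s t : ℕ, x = ((s : ℚ) + 1) / a + ((t : ℚ) + 1) / b) ∧ x < 1}.ncard)
    (ξ ψ ζ : ℚ)
    (hξ : ξ ∈ {x : ℚ | ∃ s t : ℕ, x = ((s : ℚ) + 1) / a + ((t : ℚ) + 1) / b})
    (hψ : ψ ∈ {x : ℚ | ∃ s t : ℕ, x = ((s : ℚ) + 1) / a + ((t : ℚ) + 1) / b})
    (hζ : ζ ∈ {x : ℚ | ∃ s t : ℕ, x = ((s : ℚ) + 1) / a + ((t : ℚ) + 1) / b})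
    (hord : ξ < ψ ∧ ψ < ζ)
    (hξmin : ∀ x ∈ {x : ℚ | ∃ s t : ℕ, x = ((s : ℚ) + 1) / a + ((t : ℚ) + 1) / b}, ξ ≤ x)
    (hψmin : ∀ x ∈ {x : ℚ | ∃ s t : ℕ, x = ((s : ℚ) + 1) / a + ((t : ℚ) + 1) / b},
      x ≠ ξ → ψ ≤ x)
    (hζmin : ∀ x ∈ {x : ℚ | ∃ s t : ℕ, x = ((s : ℚ) + 1) / a + ((t : ℚ) + 1) / b},
      x ≠ ξ → x ≠ ψ → ζ ≤ x) :
    ξ = 1 / a + 1 / b ∧ ψ = 1 / a + 2 / b ∧ (a : ℚ) = 1 / (2 * ξ - ψ) :=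
  stmt_13_general a b ha hab ξ ψ ζ hξ hψ hord hξmin hψmin
end

section
/- Let a ≤ b be positive coprime integers and H = {(s+1)/a + (t+1)/b : s,t ∈ ℕ}. Then {c ∈ H : c > 1} = {1 + (k+1)/(ab) : k ∈ ℕ}. In particular every integer greater than 1 lies in H, and min{c ∈ H : c > 1} = 1 + 1/(ab). -/
/-!
Over the common denominator `a * b`, the elements of `H` are the fractions `N / (a * b)` with
`N = (s + 1) * b + (t + 1) * a`. By the two-coin (Sylvester–Frobenius) theorem applied to
`N - a - b`, every `N > a * b` has this form when `a` and `b` are coprime, so the part of `H`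
above `1` is exactly `{N / (a * b) : N > a * b}`.
-/

theorem Nat.Coprime.exists_succ_mul_add_succ_mul_eq {a b N : ℕ} (hcop : a.Coprime b)
    (hN : a * b < N) : ∃ s t : ℕ, (s + 1) * b + (t + 1) * a = N := by
  have hsum : a + b ≤ N ∧ a.pred * b.pred ≤ N - a - b := by
    rcases a with _ | a
    · simp_all; omega
    rcases b with _ | b
    · simp_all; omega
    simp only [Nat.pred_succ]
    have : a * b + a + b + 1 < N := by nlinarith
    omega
  obtain ⟨s, t, hst⟩ := Nat.exists_add_mul_eq_of_gcd_dvd_of_mul_pred_le b a (N - a - b)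
    (by simp [hcop.symm.gcd_eq_one]) (by rw [mul_comm]; exact hsum.2)
  exact ⟨s, t, by grind⟩

def jumpingSet (a b : ℕ) : Set ℚ :=
  {x | ∃ s t : ℕ, x = ((s : ℚ) + 1) / a + ((t : ℚ) + 1) / b}

theorem mem_jumpingSet_iff {a b : ℕ} (ha : 0 < a) (hb : 0 < b) {x : ℚ} :
    x ∈ jumpingSet a b ↔ ∃ s t : ℕ, x = (((s + 1) * b + (t + 1) * a : ℕ) : ℚ) / (a * b) := by
  have ha' : (a : ℚ) ≠ 0 := by positivity
  have hb' : (b : ℚ) ≠ 0 := by positivity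
  simp only [jumpingSet, Set.mem_ofPred_eq, div_add_div _ _ ha' hb']
  push_cast
  simp only [mul_comm (a : ℚ)]

theorem mem_jumpingSet_and_one_lt_iff {a b : ℕ} (ha : 0 < a) (hb : 0 < b) (hcop : a.Coprime b)
    {x : ℚ} :
    x ∈ jumpingSet a b ∧ 1 < x ↔ ∃ N : ℕ, a * b < N ∧ x = N / (a * b) := by
  have one_lt_iff (N : ℕ) : 1 < (N : ℚ) / (a * b) ↔ a * b < N := by
    rw [one_lt_div (by positivity)]
    exact_mod_cast Iff.rfl
  rw [mem_jumpingSet_iff ha hb]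
  constructor
  · rintro ⟨⟨s, t, rfl⟩, hx⟩
    exact ⟨_, (one_lt_iff _).1 hx, rfl⟩
  · rintro ⟨N, hN, rfl⟩
    obtain ⟨s, t, rfl⟩ := hcop.exists_succ_mul_add_succ_mul_eq hN
    exact ⟨⟨s, t, rfl⟩, (one_lt_iff _).2 hN⟩

theorem sep_one_lt_jumpingSet_eq {a b : ℕ} (ha : 0 < a) (hb : 0 < b) (hcop : a.Coprime b) :
    {c ∈ jumpingSet a b | 1 < c} = {x : ℚ | ∃ k : ℕ, x = 1 + ((k : ℚ) + 1) / (a * b)} := by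
  have hpos : (0 : ℚ) < a * b := by positivity
  ext x
  rw [Set.mem_sep_iff, mem_jumpingSet_and_one_lt_iff ha hb hcop]
  constructor
  · rintro ⟨N, hN, rfl⟩
    refine ⟨N - a * b - 1, ?_⟩
    rw [Nat.cast_sub (by omega), Nat.cast_sub hN.le]
    field_simp
    push_cast
    ring
  · rintro ⟨k, rfl⟩
    refine ⟨a * b + k + 1, by omega, ?_⟩
    field_simp
    push_cast
    ring

theorem stmt_15 (a b : ℕ) (ha : 0 < a) (hab : a ≤ b) (hcop : Nat.Coprime a b) :
    ({c ∈ {x : ℚ | ∃ s t : ℕ, x = ((s : ℚ) + 1) / a + ((t : ℚ) + 1) / b} | 1 < c} =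
      {x : ℚ | ∃ k : ℕ, x = 1 + ((k : ℚ) + 1) / ((a : ℚ) * b)}) ∧
    (∀ m : ℕ, 1 < m →
      (m : ℚ) ∈ {x : ℚ | ∃ s t : ℕ, x = ((s : ℚ) + 1) / a + ((t : ℚ) + 1) / b}) ∧
    IsLeast {c ∈ {x : ℚ | ∃ s t : ℕ, x = ((s : ℚ) + 1) / a + ((t : ℚ) + 1) / b} | 1 < c}
      (1 + 1 / ((a : ℚ) * b)) := by
  change {c ∈ jumpingSet a b | 1 < c} = _ ∧ (∀ m : ℕ, 1 < m → (m : ℚ) ∈ jumpingSet a b) ∧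
    IsLeast {c ∈ jumpingSet a b | 1 < c} _
  have hb : 0 < b := ha.trans_le hab
  have hset := sep_one_lt_jumpingSet_eq ha hb hcop
  refine ⟨hset, fun m hm => ?_, ?_⟩
  · refine ((mem_jumpingSet_and_one_lt_iff ha hb hcop).2 ⟨m * (a * b), ?_, ?_⟩).1
    · exact lt_mul_left (Nat.mul_pos ha hb) hm
    · push_cast
      field_simp
  · rw [hset]
    refine ⟨⟨0, by norm_num⟩, ?_⟩
    rintro _ ⟨k, rfl⟩
    gcongr
    exact le_add_of_nonneg_left k.cast_nonneg
end

section
/- Let a, b be coprime integers with 1 < a ≤ b, and H = {(s+1)/a + (t+1)/b : s,t ∈ ℕ}. Then max{c ∈ H : c ≤ 1} = 1 − 1/(ab), i.e. 1 − 1/(ab) ∈ H and no element of H lies in the interval (1 − 1/(ab), 1]. -/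
lemma key16 (a b : ℕ) (ha : 1 < a) (hab : a < b) (hcop : Nat.Coprime a b) :
    ∃ s t : ℕ, b * (s + 1) + a * (t + 1) = a * b - 1 := by
  haveI : NeZero a := ⟨by omega⟩
  have hbu : IsUnit (b : ZMod a) := (ZMod.isUnit_iff_coprime b a).2 hcop.symm
  set s' : ℕ := (-(↑b : ZMod a)⁻¹).val with hs'
  have hlt : s' < a := ZMod.val_lt _
  have hdvd : a ∣ b * s' + 1 := by
    have h0 : ((b * s' + 1 : ℕ) : ZMod a) = 0 := by
      push_cast
      rw [hs', ZMod.natCast_val, ZMod.cast_id, mul_neg, ZMod.mul_inv_of_unit _ hbu]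
      ring
    exact (ZMod.natCast_eq_zero_iff _ _).1 h0
  have hpos : 0 < s' := by
    rcases Nat.eq_zero_or_pos s' with h | h
    · exfalso
      rw [h, Nat.mul_zero, Nat.zero_add] at hdvd
      have := Nat.le_of_dvd one_pos hdvd
      omega
    · exact h
  obtain ⟨k, hk⟩ := hdvd
  have hb1 : b * (a - 1) + b = b * a := by
    rw [← Nat.mul_succ, Nat.succ_eq_add_one, Nat.sub_add_cancel (by omega)]
  have hbs : b * s' ≤ b * (a - 1) := Nat.mul_le_mul_left b (by omega)
  have ha1 : a * (b - 1) + a = a * b := by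
    rw [← Nat.mul_succ, Nat.succ_eq_add_one, Nat.sub_add_cancel (by omega)]
  have hk_le : k ≤ b - 1 := by
    have h1 : a * k ≤ a * (b - 1) := by
      have hcomm : a * b = b * a := Nat.mul_comm a b
      omega
    exact Nat.le_of_mul_le_mul_left h1 (by omega)
  have hk_pos : 1 ≤ k := by
    rcases Nat.eq_zero_or_pos k with h | h
    · exfalso; rw [h, Nat.mul_zero] at hk; omega
    · exact h
  refine ⟨s' - 1, b - k - 1, ?_⟩
  have hsub : a * (b - k) + a * k = a * b := by
    rw [← Nat.mul_add, Nat.sub_add_cancel (by omega)]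
  have h1 : s' - 1 + 1 = s' := by omega
  have h2 : b - k - 1 + 1 = b - k := by omega
  rw [h1, h2]
  omega

lemma key16b (a b s t : ℕ) (ha : 1 < a) (hab : a < b) (hcop : Nat.Coprime a b)
    (h : b * (s + 1) + a * (t + 1) ≤ a * b) :
    b * (s + 1) + a * (t + 1) ≤ a * b - 1 := by
  rcases Nat.lt_or_ge (b * (s + 1) + a * (t + 1)) (a * b) with h' | h'
  · omega
  · exfalso
    have heq : b * (s + 1) + a * (t + 1) = a * b := le_antisymm h h'
    have hdvd : a ∣ b * (s + 1) := by
      have : a ∣ a * b - a * (t + 1) := by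
        exact Nat.dvd_sub (Dvd.intro b rfl) (Dvd.intro (t+1) rfl)
      have h3 : b * (s + 1) = a * b - a * (t + 1) := by omega
      rwa [h3]
    have hdvd2 : a ∣ s + 1 := hcop.dvd_of_dvd_mul_left hdvd
    have hs1 : a ≤ s + 1 := Nat.le_of_dvd (by omega) hdvd2
    have : b * a ≤ b * (s + 1) := Nat.mul_le_mul_left b hs1
    have hcomm : a * b = b * a := Nat.mul_comm a b
    have hat : a ≤ a * (t + 1) := Nat.le_mul_of_pos_right a (by omega)
    omega

theorem stmt_16 (a b : ℕ) (ha : 1 < a) (hab : a ≤ b) (hcop : Nat.Coprime a b) :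
    IsGreatest {c ∈ {x : ℚ | ∃ s t : ℕ, x = ((s : ℚ) + 1) / a + ((t : ℚ) + 1) / b} | c ≤ 1}
      (1 - 1 / ((a : ℚ) * b)) := by
  have hab' : a < b := by
    rcases Nat.lt_or_ge a b with h | h
    · exact h
    · exfalso
      have : a = b := le_antisymm hab h
      subst this
      simp [Nat.Coprime, Nat.gcd_self] at hcop
      omega
  have ha0 : (a : ℚ) ≠ 0 := by positivity
  have hb0 : (b : ℚ) ≠ 0 := by
    have : 0 < b := by omega
    positivity
  have hab0 : (0:ℚ) < (a:ℚ) * b := by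
    have : 0 < a := by omega
    have : 0 < b := by omega
    positivity
  have habge : 1 ≤ a * b := Nat.one_le_iff_ne_zero.2 (Nat.mul_ne_zero (by omega) (by omega))
  constructor
  · obtain ⟨s, t, heq⟩ := key16 a b ha hab' hcop
    refine ⟨⟨s, t, ?_⟩, ?_⟩
    · have hq : (b : ℚ) * (s + 1) + a * (t + 1) = a * b - 1 := by
        have := congrArg (Nat.cast : ℕ → ℚ) heq
        push_cast [Nat.cast_sub habge] at this
        push_cast
        linarith
      field_simp
      linarith [hq]
    · have : (0:ℚ) < 1 / ((a:ℚ) * b) := by positivity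
      linarith
  · rintro c ⟨⟨s, t, rfl⟩, hc1⟩
    have hc1' : (b:ℚ) * (s + 1) + a * (t + 1) ≤ a * b := by
      rw [div_add_div _ _ ha0 hb0, div_le_one (by positivity)] at hc1
      linarith
    have hnat : b * (s + 1) + a * (t + 1) ≤ a * b := by
      exact_mod_cast hc1'
    have hnat2 := key16b a b s t ha hab' hcop hnat
    have hq2 : (b:ℚ) * (s + 1) + a * (t + 1) ≤ a * b - 1 := by
      have := (Nat.cast_le (α := ℚ)).2 hnat2
      push_cast [Nat.cast_sub habge] at this
      linarith
    have hrhs : (1 : ℚ) - 1 / ((a:ℚ)*b) = ((a:ℚ)*b - 1)/((a:ℚ)*b) := by field_simp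
    rw [hrhs, div_add_div _ _ ha0 hb0, div_le_div_iff₀ (by positivity) hab0]
    nlinarith [mul_le_mul_of_nonneg_right hq2 (le_of_lt hab0)]
end

section
/- Let P^{-1} = (x_{i,j}) be the inverse of a proximity matrix. If k+1 is a free point (proximate only to k) or k = n, then for any i ≥ k the truncation satisfies X_i^{≤k} = x_{i,k} · X_k, i.e. x_{i,j} = x_{i,k} · x_{k,j} for all j ≤ k. -/
theorem stmt_18 (n : ℕ) (hn : 0 < n) (P : Matrix (Fin n) (Fin n) ℤ)
    (hdiag : ∀ i, P i i = 1)
    (hupper : ∀ i j : Fin n, i < j → P i j = 0)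
    (hlower : ∀ i j : Fin n, j < i → P i j = 0 ∨ P i j = -1)
    (hcol : ∀ j : Fin n, ∃ k : Fin n, ∀ i : Fin n, P i j = -1 ↔ j < i ∧ i ≤ k)
    (hpred : ∀ ν : Fin n, 0 < ν.val →
      P ν ⟨ν.val - 1, Nat.lt_of_le_of_lt (Nat.sub_le _ _) ν.isLt⟩ = -1)
    (k : Fin n)
    -- either k is the last point, or the point k+1 is free (proximate only to k)
    (hfree : (k : ℕ) = n - 1 ∨
      (∀ k1 : Fin n, (k1 : ℕ) = (k : ℕ) + 1 → ∀ j : Fin n, P k1 j = -1 → j = k)) :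
    ∀ i j : Fin n, k ≤ i → j ≤ k → P⁻¹ i j = P⁻¹ i k * P⁻¹ k j := by
  have hBT : P.BlockTriangular OrderDual.toDual := by
    intro i j h
    exact hupper i j (OrderDual.toDual_lt_toDual.mp h)
  have hdet : P.det = 1 := by
    rw [Matrix.det_of_lowerTriangular P hBT]
    simp [hdiag]
  haveI : Invertible P := P.invertibleOfIsUnitDet (by rw [hdet]; exact isUnit_one)
  have hXu : ∀ i j : Fin n, i < j → P⁻¹ i j = 0 := by
    intro i j h
    exact Matrix.blockTriangular_inv_of_blockTriangular hBT
      (OrderDual.toDual_lt_toDual.mpr h)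
  have hPX : P * P⁻¹ = 1 := Matrix.mul_inv_of_invertible P
  have hrec : ∀ i j : Fin n,
      P⁻¹ i j = (if i = j then 1 else 0) - ∑ m ∈ Finset.Iio i, P i m * P⁻¹ m j := by
    intro i j
    have h1 : (P * P⁻¹) i j = (1 : Matrix (Fin n) (Fin n) ℤ) i j := by rw [hPX]
    rw [Matrix.mul_apply, Matrix.one_apply] at h1
    have h2 : ∑ m, P i m * P⁻¹ m j = ∑ m ∈ Finset.Iic i, P i m * P⁻¹ m j := by
      symm
      apply Finset.sum_subset (Finset.subset_univ _)
      intro m _ hm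
      rw [Finset.mem_Iic, not_le] at hm
      rw [hupper i m hm, zero_mul]
    rw [h2, ← Finset.Iio_insert, Finset.sum_insert (by simp), hdiag, one_mul] at h1
    exact eq_sub_of_add_eq h1
  have hXkk : P⁻¹ k k = 1 := by
    rw [hrec k k, if_pos rfl, Finset.sum_eq_zero, sub_zero]
    intro m hm
    rw [hXu m k (Finset.mem_Iio.mp hm), mul_zero]
  suffices H : ∀ N : ℕ, ∀ i j : Fin n, i.val < N → k ≤ i → j ≤ k →
      P⁻¹ i j = P⁻¹ i k * P⁻¹ k j by
    intro i j hki hjk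
    exact H (i.val + 1) i j (Nat.lt_succ_self _) hki hjk
  intro N
  induction N with
  | zero => intro i j h; exact absurd h (Nat.not_lt_zero _)
  | succ N IH =>
    intro i j hiN hki hjk
    rcases eq_or_lt_of_le hki with heq | hlt
    · cases heq
      rw [hXkk, one_mul]
    · -- k < i, so the free case applies
      have hiv : (k : ℕ) < i.val := hlt
      have hfree' : ∀ k1 : Fin n, (k1 : ℕ) = (k : ℕ) + 1 → ∀ m : Fin n,
          P k1 m = -1 → m = k := by
        rcases hfree with h | h
        · exfalso; have := i.isLt; omega
        · exact h
      have hk1 : (k : ℕ) + 1 < n := by have := i.isLt; omega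
      set k1 : Fin n := ⟨(k : ℕ) + 1, hk1⟩ with hk1def
      have hmem : ∀ m : Fin n, P i m = -1 → k ≤ m := by
        intro m hm
        by_contra hmk
        push_neg at hmk
        obtain ⟨km, hkm⟩ := hcol m
        have h1 := (hkm i).mp hm
        have h2 : P k1 m = -1 := by
          refine (hkm k1).mpr ⟨?_, le_trans ?_ h1.2⟩
          · have : (m : ℕ) < (k : ℕ) := hmk
            exact Fin.lt_def.mpr (by simp [hk1def]; omega)
          · exact Fin.le_def.mpr (by simp [hk1def]; omega)
        have h3 := hfree' k1 rfl m h2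
        have : (m : ℕ) < (k : ℕ) := hmk
        rw [h3] at this
        omega
      have hstep : ∀ j' : Fin n, j' ≤ k →
          P⁻¹ i j' = ∑ m ∈ Finset.Iio i, (-(P i m)) * P⁻¹ m j' := by
        intro j' hj'
        have hne : i ≠ j' := by
          intro h
          have : (j' : ℕ) ≤ (k : ℕ) := hj'
          rw [← h] at this
          omega
        rw [hrec i j', if_neg hne, zero_sub, ← Finset.sum_neg_distrib]
        congr 1
        ext m
        ring
      rw [hstep j hjk, hstep k le_rfl, Finset.sum_mul]
      apply Finset.sum_congr rfl
      intro m hm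
      rw [Finset.mem_Iio] at hm
      rcases hlower i m hm with h0 | h1
      · rw [h0]; ring
      · have hkm := hmem m h1
        have hmN : (m : ℕ) < N := by
          have : (m : ℕ) < (i : ℕ) := hm
          omega
        rw [IH m j hmN hkm hjk]
        ring
end
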